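/- For every t in the base field, the bracket [e₁,e₄]_t=[e₂,e₃]_t=-e₁, [e₂,e₄]_t=(t-1/2)e₂, [e₃,e₄]_t=-(t+1/2)e₃ on a 4-dimensional vector space satisfies the Jacobi identity, so the deformed family Φ'_{1,t} is a family of Lie algebras. -/

import Mathlib

/-!
The span of `e₁, e₂, e₃` is a Heisenberg algebra (`[e₂,e₃] = -e₁`, centre `K e₁`), and `e₄` acts
on it diagonally. Such a bracket is a Lie bracket exactly when `ad e₄` is a derivation of the
Heisenberg algebra, i.e. when its eigenvalue on the centre is the sum of those on `e₂` and `e₃`;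
for `Φ′_{1,t}` this reads `-1 = (t - 1/2) - (t + 1/2)`, which holds for every `t`.
-/

noncomputable section

/-- The deformed bracket of `Φ′_{1,t}` on `Fin 4 → K`, with basis `e₁,…,e₄`
(indexed `0,…,3`): `[e₁,e₄]=[e₂,e₃]=-e₁`, `[e₂,e₄]=(t-1/2)e₂`,
`[e₃,e₄]=-(t+1/2)e₃`, extended antisymmetrically and bilinearly. -/
def brPhi1t {K : Type*} [Field K] (t : K) (x y : Fin 4 → K) : Fin 4 → K :=
  ![ -(x 0 * y 3 - x 3 * y 0) - (x 1 * y 2 - x 2 * y 1),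
     (t - 1/2) * (x 1 * y 3 - x 3 * y 1),
     -(t + 1/2) * (x 2 * y 3 - x 3 * y 2),
     0 ]

/-- `[e₂,e₃] = -e₁` and `[eᵢ,e₄] = aᵢ eᵢ` for `i = 1, 2, 3`, with `(a₁, a₂, a₃) = (a, b, c)`. -/
def heisenbergDiagExtBracket {R : Type*} [CommRing R] (a b c : R) (x y : Fin 4 → R) :
    Fin 4 → R :=
  ![ a * (x 0 * y 3 - x 3 * y 0) - (x 1 * y 2 - x 2 * y 1),
     b * (x 1 * y 3 - x 3 * y 1),
     c * (x 2 * y 3 - x 3 * y 2),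
     0 ]

theorem heisenbergDiagExtBracket_jacobi {R : Type*} [CommRing R] {a b c : R} (h : a = b + c)
    (x y z : Fin 4 → R) :
    let br := heisenbergDiagExtBracket a b c
    br (br x y) z + br (br y z) x + br (br z x) y = 0 := by
  subst h
  funext i
  fin_cases i <;> simp [heisenbergDiagExtBracket] <;> ring

theorem brPhi1t_eq_heisenbergDiagExtBracket {K : Type*} [Field K] (t : K) :
    brPhi1t t = heisenbergDiagExtBracket (-1) (t - 1/2) (-(t + 1/2)) := by
  funext x y i
  fin_cases i <;> simp [brPhi1t, heisenbergDiagExtBracket]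

/-- For every `t`, the deformed bracket of `Φ′_{1,t}` satisfies the Jacobi
identity, so `Φ′_{1,t}` is a family of Lie algebras. -/
theorem phi1t_jacobi {K : Type*} [Field K] (h2 : (2 : K) ≠ 0) (t : K) :
    ∀ x y z : Fin 4 → K,
      brPhi1t t (brPhi1t t x y) z + brPhi1t t (brPhi1t t y z) x
        + brPhi1t t (brPhi1t t z x) y = 0 := by
  rw [brPhi1t_eq_heisenbergDiagExtBracket]
  exact heisenbergDiagExtBracket_jacobi (by field_simp; ring)
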